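/- Let ξ ∈ ℚ[[x]] be the unique formal power series with zero constant term satisfying x·ξ(x) − x³ − ξ(x)³ = 0, and let G(x) = x³ ∑_{i≥0} Q_{i,0} x^i ∈ ℚ[[x]], where Q_{i,0} is the number of knight walks ending at (i,0). Define the iterates ξ^{(0)}(x) = x and ξ^{(i+1)} = ξ ∘ ξ^{(i)}. Then the valuation of ξ^{(i)} is 2^i, the infinite sum ∑_{i≥0} (−1)^i (ξ^{(i)}(x) · ξ^{(i+1)}(x))² converges in ℚ[[x]], and G(x) = ∑_{i≥0} (−1)^i (ξ^{(i)}(x) · ξ^{(i+1)}(x))². -/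

import Mathlib

/-- `w : Fin (n+1) → ℤ × ℤ` is a knight walk of length `n`: it starts at `(1,1)`, takes its
steps in `{(-1,2), (2,-1)}` and all its vertices have nonnegative coordinates. -/
def IsKnightWalk (n : ℕ) (w : Fin (n + 1) → ℤ × ℤ) : Prop :=
  w 0 = (1, 1) ∧
  (∀ k : Fin n, w k.succ - w k.castSucc ∈ ({(-1, 2), (2, -1)} : Set (ℤ × ℤ))) ∧
  ∀ k, 0 ≤ (w k).1 ∧ 0 ≤ (w k).2

/-- `Q i j` is the number of knight walks (of any length) ending at `(i, j)`. -/
noncomputable def Q (i j : ℕ) : ℕ :=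
  Nat.card {p : Σ n : ℕ, Fin (n + 1) → ℤ × ℤ //
    IsKnightWalk p.1 p.2 ∧ p.2 (Fin.last p.1) = ((i : ℤ), (j : ℤ))}

/-- `G(x) = x³ ∑_{i ≥ 0} Q_{i,0} xⁱ`, the generating function of knight walks ending on
the `x`-axis. -/
noncomputable def G : PowerSeries ℚ :=
  PowerSeries.mk fun n => if 3 ≤ n then (Q (n - 3) 0 : ℚ) else 0

/-- Composition `F(f)` of formal power series; this is the usual composition whenever `f`
has zero constant term. -/
noncomputable def composePS (F f : PowerSeries ℚ) : PowerSeries ℚ :=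
  PowerSeries.mk fun N => PowerSeries.coeff N
    (∑ k ∈ Finset.range (N + 1), PowerSeries.C (PowerSeries.coeff k F) * f ^ k)

/-- The iterates `ξ⁽⁰⁾(x) = x`, `ξ⁽ⁱ⁺¹⁾ = ξ ∘ ξ⁽ⁱ⁾`. -/
noncomputable def iterXi (ξ : PowerSeries ℚ) : ℕ → PowerSeries ℚ
  | 0 => PowerSeries.X
  | i + 1 => composePS ξ (iterXi ξ i)

/-! The kernel method. Let `Pₙ(x, y)` be the endpoint generating polynomial of the walks of
length `n`. Appending a step gives `x y Pₙ₊₁ = (x³ + y³) Pₙ - Q₀,ₙ₊₂ yⁿ⁺⁵ - Qₙ₊₂,₀ xⁿ⁺⁵`: a walk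
ending at `(a, b)` can take the step `(-1, 2)` unless `a = 0` and the step `(2, -1)` unless `b = 0`.
On the curve `y = ξ(x)` the kernel `x y - x³ - y³` vanishes, so the boundary terms telescope;
since `Pₙ(x, ξ)` has order at least `n + 2` and `Q` is symmetric, this gives
`G(x) + G(ξ(x)) = (x ξ(x))²`. Substituting `ξ⁽ⁱ⁾` into this identity and taking the alternating
sum gives the expansion of `G`, which converges because `ξ = x² · unit` forces
`ξ⁽ⁱ⁾ = x^(2ⁱ) · unit`. -/

open PowerSeries Finset

section PowerSeries

variable {R : Type*} [CommRing R]

theorem PowerSeries.eq_zero_of_forall_X_pow_dvd {f : R⟦X⟧} (h : ∀ m, X ^ m ∣ f) : f = 0 := by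
  ext k
  exact X_pow_dvd_iff.1 (h (k + 1)) k k.lt_succ_self

theorem PowerSeries.dvd_subst_of_constantCoeff_eq_zero {F φ : R⟦X⟧} (hF : constantCoeff F = 0)
    (hφ : constantCoeff φ = 0) : φ ∣ F.subst φ := by
  obtain ⟨F', rfl⟩ := X_dvd_iff.2 hF
  have ha := HasSubst.of_constantCoeff_zero' hφ
  rw [subst_mul ha, subst_X ha]
  exact dvd_mul_right _ _

theorem PowerSeries.X_pow_dvd_subst_sub_subst {m : ℕ} {f g φ : R⟦X⟧}
    (hφ : constantCoeff φ = 0) (h : X ^ m ∣ f - g) : X ^ m ∣ f.subst φ - g.subst φ := by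
  obtain ⟨q, hq⟩ := h
  have ha := HasSubst.of_constantCoeff_zero' hφ
  rw [← subst_sub ha, hq, subst_mul ha, subst_pow ha, subst_X ha]
  exact dvd_mul_of_dvd_left (pow_dvd_pow_of_dvd (X_dvd_iff.2 hφ) m) _

variable [IsDomain R]

theorem PowerSeries.order_X_pow_mul_of_isUnit {v : R⟦X⟧} (hv : IsUnit v) (m : ℕ) :
    (X ^ m * v).order = (m : ℕ∞) := by
  rw [order_mul, order_X_pow, order_zero_of_unit hv, add_zero]

/-- Writing `ξ = x g`, cancelling `x²` in the kernel equation gives `g = x (1 + g³)`. -/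
theorem exists_isUnit_eq_X_sq_mul_of_kernel {ξ : R⟦X⟧} (h0 : constantCoeff ξ = 0)
    (hroot : X * ξ - X ^ 3 - ξ ^ 3 = 0) : ∃ u, IsUnit u ∧ ξ = X ^ 2 * u := by
  obtain ⟨g, rfl⟩ := X_dvd_iff.2 h0
  have hg : g = X * (1 + g ^ 3) := by
    have h : X ^ 2 * (g - X * (1 + g ^ 3)) = 0 := by linear_combination hroot
    exact sub_eq_zero.1 ((mul_eq_zero.1 h).resolve_left (pow_ne_zero _ X_ne_zero))
  have hg0 : constantCoeff g = 0 := by rw [hg, map_mul, constantCoeff_X, zero_mul]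
  refine ⟨1 + g ^ 3, ?_, by linear_combination X * hg⟩
  rw [isUnit_iff_constantCoeff, map_add, map_one, map_pow, hg0]
  norm_num

end PowerSeries

theorem eq_sum_range_neg_one_pow_smul_add {R M : Type*} [Ring R] [AddCommGroup M] [Module R M]
    (t : ℕ → M) (n : ℕ) :
    t 0 = ∑ i ∈ range n, (-1 : R) ^ i • (t i + t (i + 1)) + (-1 : R) ^ n • t n := by
  induction n with
  | zero => simp
  | succ n ih =>
    conv_lhs => rw [ih]
    rw [sum_range_succ, pow_succ, mul_neg_one, neg_smul, smul_add]
    abel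

namespace KnightWalk

def steps : Finset (ℤ × ℤ) := {(-1, 2), (2, -1)}

def walks : (n : ℕ) → Finset (Fin (n + 1) → ℤ × ℤ)
  | 0 => {fun _ => (1, 1)}
  | n + 1 => ((walks n ×ˢ steps).filter fun p =>
      0 ≤ (p.1 (Fin.last n) + p.2).1 ∧ 0 ≤ (p.1 (Fin.last n) + p.2).2).image
        fun p => Fin.snoc p.1 (p.1 (Fin.last n) + p.2)

theorem isKnightWalk_snoc {n : ℕ} {w : Fin (n + 1) → ℤ × ℤ} {x : ℤ × ℤ} :
    IsKnightWalk (n + 1) (Fin.snoc w x) ↔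
      IsKnightWalk n w ∧ (∃ d ∈ steps, x = w (Fin.last n) + d) ∧ 0 ≤ x.1 ∧ 0 ≤ x.2 := by
  have hstep : x - w (Fin.last n) ∈ ({(-1, 2), (2, -1)} : Set (ℤ × ℤ)) ↔
      ∃ d ∈ steps, x = w (Fin.last n) + d :=
    ⟨fun h => ⟨_, by simpa [steps] using h, by abel⟩,
      by rintro ⟨d, hd, rfl⟩; simpa [steps] using hd⟩
  rw [← hstep]
  simp only [IsKnightWalk, Fin.forall_fin_succ', ← Fin.castSucc_zero,
    Fin.snoc_castSucc, Fin.snoc_last, Fin.succ_castSucc, Fin.succ_last]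
  tauto

theorem mem_walks {n : ℕ} {w : Fin (n + 1) → ℤ × ℤ} : w ∈ walks n ↔ IsKnightWalk n w := by
  induction n with
  | zero =>
    simp only [walks, mem_singleton, IsKnightWalk]
    constructor
    · rintro rfl
      simp
    · rintro ⟨h0, -, -⟩
      funext k
      rw [Fin.fin_one_eq_zero k, h0]
  | succ n ih =>
    obtain ⟨v, x, rfl⟩ : ∃ v x, w = Fin.snoc v x := ⟨_, _, (Fin.snoc_init_self w).symm⟩
    simp only [walks, mem_image, mem_filter, mem_product, Fin.snoc_inj, isKnightWalk_snoc, ← ih]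
    constructor
    · rintro ⟨⟨v, d⟩, ⟨⟨hv, hd⟩, hnn⟩, rfl, rfl⟩
      exact ⟨hv, ⟨d, hd, rfl⟩, hnn⟩
    · rintro ⟨hv, ⟨d, hd, rfl⟩, hnn⟩
      exact ⟨(v, d), ⟨⟨hv, hd⟩, hnn⟩, rfl, rfl⟩

theorem last_fst_add_last_snd {n : ℕ} {w : Fin (n + 1) → ℤ × ℤ} (hw : w ∈ walks n) :
    (w (Fin.last n)).1 + (w (Fin.last n)).2 = n + 2 := by
  induction n with
  | zero =>
    rw [walks, mem_singleton] at hw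
    subst hw
    norm_num
  | succ n ih =>
    simp only [walks, mem_image, mem_filter, mem_product] at hw
    obtain ⟨⟨v, d⟩, ⟨⟨hv, hd⟩, -⟩, rfl⟩ := hw
    have := ih hv
    simp only [steps, mem_insert, mem_singleton] at hd
    rcases hd with rfl | rfl <;> simp only [Fin.snoc_last, Prod.fst_add, Prod.snd_add] <;>
      push_cast <;> linarith

theorem last_nonneg {n : ℕ} {w : Fin (n + 1) → ℤ × ℤ} (hw : w ∈ walks n) :
    0 ≤ (w (Fin.last n)).1 ∧ 0 ≤ (w (Fin.last n)).2 :=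
  (mem_walks.1 hw).2.2 _

theorem card_filter_walks_last_eq {n a b : ℕ} (h : a + b = n + 2) :
    #{w ∈ walks n | w (Fin.last n) = ((a : ℤ), (b : ℤ))} = Q a b := by
  rw [Q, ← Nat.card_eq_finsetCard]
  refine Nat.card_congr (Equiv.ofBijective
    (fun w => ⟨⟨n, w.1⟩, mem_walks.1 (mem_filter.1 w.2).1, (mem_filter.1 w.2).2⟩) ⟨?_, ?_⟩)
  · intro w w' hww'
    exact Subtype.ext (eq_of_heq (Sigma.mk.inj_iff.1 (congrArg Subtype.val hww')).2)
  · rintro ⟨⟨m, w⟩, hw, hend⟩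
    dsimp only at hw hend
    have hm := last_fst_add_last_snd (mem_walks.2 hw)
    rw [hend] at hm
    obtain rfl : m = n := by omega
    exact ⟨⟨w, mem_filter.2 ⟨mem_walks.2 hw, hend⟩⟩, rfl⟩

theorem isKnightWalk_swap {n : ℕ} {w : Fin (n + 1) → ℤ × ℤ} (hw : IsKnightWalk n w) :
    IsKnightWalk n (Prod.swap ∘ w) := by
  obtain ⟨h0, hsteps, hnn⟩ := hw
  refine ⟨by simp [h0], fun k => ?_, fun k => (hnn k).symm⟩
  rcases hsteps k with h | h <;> simp_all [Prod.ext_iff]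

theorem _root_.Q_comm (a b : ℕ) : Q a b = Q b a :=
  Nat.card_congr
    { toFun := fun p => ⟨⟨p.1.1, Prod.swap ∘ p.1.2⟩, isKnightWalk_swap p.2.1, by simp [p.2.2]⟩
      invFun := fun p => ⟨⟨p.1.1, Prod.swap ∘ p.1.2⟩, isKnightWalk_swap p.2.1, by simp [p.2.2]⟩
      left_inv := fun _ => rfl
      right_inv := fun _ => rfl }

theorem _root_.Q_eq_zero_of_add_lt_two {a b : ℕ} (h : a + b < 2) : Q a b = 0 := by
  rw [Q, Nat.card_eq_zero]
  refine Or.inl ⟨fun ⟨⟨m, w⟩, hw, hend⟩ => ?_⟩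
  dsimp only at hw hend
  have hm := last_fst_add_last_snd (mem_walks.2 hw)
  rw [hend] at hm
  omega

variable {R : Type*} [CommRing R]

/-- Only evaluated at points of the quadrant, where `Int.toNat` is the identity. -/
def walkMonomial (x y : R) (a : ℤ × ℤ) : R := x ^ a.1.toNat * y ^ a.2.toNat

/-- `Pₙ(x, y)`. -/
def walkPoly (n : ℕ) (x y : R) : R := ∑ w ∈ walks n, walkMonomial x y (w (Fin.last n))

theorem walkPoly_zero (x y : R) : walkPoly 0 x y = x * y := by
  simp [walkPoly, walks, walkMonomial]

theorem walkPoly_succ (n : ℕ) (x y : R) : walkPoly (n + 1) x y = ∑ w ∈ walks n, ∑ d ∈ steps,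
    (if 0 ≤ (w (Fin.last n) + d).1 ∧ 0 ≤ (w (Fin.last n) + d).2 then
      walkMonomial x y (w (Fin.last n) + d) else 0) := by
  rw [walkPoly, walks, sum_image, sum_filter, sum_product]
  · simp only [Fin.snoc_last]
  · rintro ⟨v, d⟩ - ⟨v', d'⟩ - h
    obtain ⟨rfl, h⟩ := Fin.snoc_inj.1 h
    simp_all

theorem mul_ite_walkMonomial_step_fst {x y : R} {a : ℤ × ℤ} (ha : 0 ≤ a.1 ∧ 0 ≤ a.2) :
    x * y * (if 0 ≤ (a + (-1, 2)).1 ∧ 0 ≤ (a + (-1, 2)).2 then walkMonomial x y (a + (-1, 2))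
      else 0) + (if a.1 = 0 then y ^ 3 * walkMonomial x y a else 0) =
      y ^ 3 * walkMonomial x y a := by
  by_cases h : a.1 = 0
  · rw [if_neg (by simp only [Prod.fst_add, Prod.snd_add]; omega), if_pos h]
    ring
  · obtain ⟨t, ht⟩ : ∃ t, a.1.toNat = t + 1 := ⟨a.1.toNat - 1, by omega⟩
    have e1 : (a + (-1, 2)).1.toNat = t := by simp only [Prod.fst_add]; omega
    have e2 : (a + (-1, 2)).2.toNat = a.2.toNat + 2 := by simp only [Prod.snd_add]; omega
    rw [if_pos (by simp only [Prod.fst_add, Prod.snd_add]; omega), if_neg h, walkMonomial,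
      walkMonomial, e1, e2, ht]
    ring

theorem mul_ite_walkMonomial_step_snd {x y : R} {a : ℤ × ℤ} (ha : 0 ≤ a.1 ∧ 0 ≤ a.2) :
    x * y * (if 0 ≤ (a + (2, -1)).1 ∧ 0 ≤ (a + (2, -1)).2 then walkMonomial x y (a + (2, -1))
      else 0) + (if a.2 = 0 then x ^ 3 * walkMonomial x y a else 0) =
      x ^ 3 * walkMonomial x y a := by
  by_cases h : a.2 = 0
  · rw [if_neg (by simp only [Prod.fst_add, Prod.snd_add]; omega), if_pos h]
    ring
  · obtain ⟨t, ht⟩ : ∃ t, a.2.toNat = t + 1 := ⟨a.2.toNat - 1, by omega⟩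
    have e1 : (a + (2, -1)).1.toNat = a.1.toNat + 2 := by simp only [Prod.fst_add]; omega
    have e2 : (a + (2, -1)).2.toNat = t := by simp only [Prod.snd_add]; omega
    rw [if_pos (by simp only [Prod.fst_add, Prod.snd_add]; omega), if_neg h, walkMonomial,
      walkMonomial, e1, e2, ht]
    ring

theorem mul_sum_steps_ite_walkMonomial_add {x y : R} {a : ℤ × ℤ} (ha : 0 ≤ a.1 ∧ 0 ≤ a.2) :
    x * y * ∑ d ∈ steps,
        (if 0 ≤ (a + d).1 ∧ 0 ≤ (a + d).2 then walkMonomial x y (a + d) else 0) +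
      (if a.1 = 0 then y ^ 3 * walkMonomial x y a else 0) +
      (if a.2 = 0 then x ^ 3 * walkMonomial x y a else 0) =
      (x ^ 3 + y ^ 3) * walkMonomial x y a := by
  rw [steps, sum_pair (by decide)]
  linear_combination mul_ite_walkMonomial_step_fst (x := x) (y := y) ha +
    mul_ite_walkMonomial_step_snd (x := x) (y := y) ha

theorem sum_walks_ite_last_eq (n a b : ℕ) (h : a + b = n + 2) (c : R) :
    ∑ w ∈ walks n, (if w (Fin.last n) = ((a : ℤ), (b : ℤ)) then c else 0) = Q a b • c := by
  rw [← sum_filter, sum_const, card_filter_walks_last_eq h]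

theorem sum_walks_ite_fst_eq_zero (n : ℕ) (x y : R) :
    ∑ w ∈ walks n,
        (if (w (Fin.last n)).1 = 0 then y ^ 3 * walkMonomial x y (w (Fin.last n)) else 0) =
      Q 0 (n + 2) • y ^ (n + 5) := by
  rw [← sum_walks_ite_last_eq n 0 (n + 2) (by ring)]
  refine sum_congr rfl fun w hw => ?_
  have hsum := last_fst_add_last_snd hw
  generalize w (Fin.last n) = p at hsum ⊢
  obtain ⟨a, b⟩ := p
  dsimp only at hsum
  by_cases ha : a = 0
  · subst ha
    obtain rfl : b = ((n + 2 : ℕ) : ℤ) := by push_cast; linarith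
    rw [if_pos rfl, if_pos (by simp), walkMonomial]
    simp only [Int.toNat_zero, Int.toNat_natCast, pow_zero, one_mul]
    ring
  · simp [ha]

theorem sum_walks_ite_snd_eq_zero (n : ℕ) (x y : R) :
    ∑ w ∈ walks n,
        (if (w (Fin.last n)).2 = 0 then x ^ 3 * walkMonomial x y (w (Fin.last n)) else 0) =
      Q (n + 2) 0 • x ^ (n + 5) := by
  rw [← sum_walks_ite_last_eq n (n + 2) 0 rfl]
  refine sum_congr rfl fun w hw => ?_
  have hsum := last_fst_add_last_snd hw
  generalize w (Fin.last n) = p at hsum ⊢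
  obtain ⟨a, b⟩ := p
  dsimp only at hsum
  by_cases hb : b = 0
  · subst hb
    obtain rfl : a = ((n + 2 : ℕ) : ℤ) := by push_cast; linarith
    rw [if_pos rfl, if_pos (by simp), walkMonomial]
    simp only [Int.toNat_zero, Int.toNat_natCast, pow_zero, mul_one]
    ring
  · simp [hb]

theorem mul_walkPoly_succ_add (n : ℕ) (x y : R) :
    x * y * walkPoly (n + 1) x y + Q 0 (n + 2) • y ^ (n + 5) + Q (n + 2) 0 • x ^ (n + 5) =
      (x ^ 3 + y ^ 3) * walkPoly n x y := by
  rw [← sum_walks_ite_fst_eq_zero, ← sum_walks_ite_snd_eq_zero, walkPoly_succ, walkPoly, mul_sum,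
    mul_sum, ← sum_add_distrib, ← sum_add_distrib]
  exact sum_congr rfl fun w hw => mul_sum_steps_ite_walkMonomial_add (last_nonneg hw)

theorem mul_sub_walkPoly_of_kernel {x y : R} (hxy : x * y = x ^ 3 + y ^ 3) (M : ℕ) :
    x * y * (x * y - walkPoly M x y) =
      ∑ n ∈ range M, Q (n + 2) 0 • (x ^ (n + 5) + y ^ (n + 5)) := by
  have hstep (n : ℕ) : x * y * (walkPoly n x y - walkPoly (n + 1) x y) =
      Q (n + 2) 0 • (x ^ (n + 5) + y ^ (n + 5)) := by
    have h := mul_walkPoly_succ_add n x y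
    rw [Q_comm 0 (n + 2)] at h
    rw [smul_add]
    linear_combination walkPoly n x y * hxy - h
  calc x * y * (x * y - walkPoly M x y)
      = x * y * ∑ n ∈ range M, (walkPoly n x y - walkPoly (n + 1) x y) := by
        rw [sum_range_sub', walkPoly_zero]
    _ = _ := by
        rw [mul_sum]
        exact sum_congr rfl fun n _ => hstep n

theorem pow_dvd_walkPoly {t x y : R} (hx : t ∣ x) (hy : t ∣ y) (n : ℕ) :
    t ^ (n + 2) ∣ walkPoly n x y := by
  refine dvd_sum fun w hw => ?_
  have hsum := last_fst_add_last_snd hw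
  have hnn := last_nonneg hw
  rw [show n + 2 = (w (Fin.last n)).1.toNat + (w (Fin.last n)).2.toNat by omega, pow_add]
  exact mul_dvd_mul (pow_dvd_pow_of_dvd hx _) (pow_dvd_pow_of_dvd hy _)

end KnightWalk

open KnightWalk

theorem composePS_eq_subst {f : ℚ⟦X⟧} (hf : constantCoeff f = 0) (F : ℚ⟦X⟧) :
    composePS F f = F.subst f := by
  ext N
  rw [coeff_subst' (HasSubst.of_constantCoeff_zero' hf),
    finsum_eq_sum_of_support_subset (s := range (N + 1))]
  · simp [composePS, coeff_C_mul]
  · intro k hk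
    rw [coe_range, Set.mem_Iio]
    by_contra h
    have hN : (N : ℕ∞) < (f ^ k).order :=
      (Nat.cast_lt.2 (by omega)).trans_le (le_order_pow_of_constantCoeff_eq_zero k hf)
    exact hk (show coeff k F • coeff N (f ^ k) = 0 by rw [coeff_of_lt_order N hN, smul_zero])

theorem iterXi_succ_eq_subst {ξ : ℚ⟦X⟧} {i : ℕ} (h : constantCoeff (iterXi ξ i) = 0) :
    iterXi ξ (i + 1) = ξ.subst (iterXi ξ i) :=
  composePS_eq_subst h ξ

theorem exists_isUnit_iterXi_eq_X_pow_mul {k : ℕ} (hk : k ≠ 0) {u ξ : ℚ⟦X⟧} (hu : IsUnit u)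
    (hξ : ξ = X ^ k * u) (i : ℕ) : ∃ v, IsUnit v ∧ iterXi ξ i = X ^ (k ^ i) * v := by
  subst hξ
  induction i with
  | zero => exact ⟨1, isUnit_one, by simp [iterXi]⟩
  | succ i ih =>
    obtain ⟨v, hv, hi⟩ := ih
    have h0 : constantCoeff (iterXi (X ^ k * u) i) = 0 := by
      rw [hi, map_mul, map_pow, constantCoeff_X, zero_pow (pow_ne_zero _ hk), zero_mul]
    have ha := HasSubst.of_constantCoeff_zero' h0
    have hu' : IsUnit (u.subst (iterXi (X ^ k * u) i)) := by
      simpa [coe_substAlgHom] using hu.map (substAlgHom (R := ℚ) ha)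
    refine ⟨v ^ k * u.subst (iterXi (X ^ k * u) i), (hv.pow k).mul hu', ?_⟩
    rw [iterXi_succ_eq_subst h0, subst_mul ha, subst_pow ha, subst_X ha, hi]
    ring

section Iterates

variable {ξ : ℚ⟦X⟧}

theorem X_pow_dvd_iterXi (h0 : constantCoeff ξ = 0) (hroot : X * ξ - X ^ 3 - ξ ^ 3 = 0)
    (i : ℕ) : X ^ 2 ^ i ∣ iterXi ξ i := by
  obtain ⟨u, hu, hξ⟩ := exists_isUnit_eq_X_sq_mul_of_kernel h0 hroot
  obtain ⟨v, -, hv⟩ := exists_isUnit_iterXi_eq_X_pow_mul two_ne_zero hu hξ i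
  exact hv ▸ dvd_mul_right _ _

theorem constantCoeff_iterXi (h0 : constantCoeff ξ = 0) (hroot : X * ξ - X ^ 3 - ξ ^ 3 = 0)
    (i : ℕ) : constantCoeff (iterXi ξ i) = 0 :=
  X_dvd_iff.1 ((dvd_pow_self X (pow_ne_zero i two_ne_zero)).trans (X_pow_dvd_iterXi h0 hroot i))

theorem order_iterXi (h0 : constantCoeff ξ = 0) (hroot : X * ξ - X ^ 3 - ξ ^ 3 = 0) (i : ℕ) :
    (iterXi ξ i).order = (2 ^ i : ℕ) := by
  obtain ⟨u, hu, hξ⟩ := exists_isUnit_eq_X_sq_mul_of_kernel h0 hroot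
  obtain ⟨v, hv, hi⟩ := exists_isUnit_iterXi_eq_X_pow_mul two_ne_zero hu hξ i
  rw [hi, order_X_pow_mul_of_isUnit hv]

theorem coeff_iterXi_mul_iterXi_succ_sq_eq_zero (h0 : constantCoeff ξ = 0)
    (hroot : X * ξ - X ^ 3 - ξ ^ 3 = 0) {N i : ℕ} (h : N < 2 ^ i) :
    coeff N ((iterXi ξ i * iterXi ξ (i + 1)) ^ 2) = 0 :=
  X_pow_dvd_iff.1 (dvd_pow ((X_pow_dvd_iterXi h0 hroot i).mul_right _) two_ne_zero) N h

end Iterates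

theorem constantCoeff_G : constantCoeff G = 0 := by
  simp [G]

theorem X_pow_dvd_G_sub_sum (M : ℕ) :
    X ^ (M + 5) ∣ G - ∑ n ∈ range M, Q (n + 2) 0 • (X : ℚ⟦X⟧) ^ (n + 5) := by
  refine X_pow_dvd_iff.2 fun k hk => ?_
  rw [map_sub, map_sum, sub_eq_zero]
  simp only [map_nsmul, coeff_X_pow]
  rcases lt_or_ge k 5 with h5 | h5
  · rw [sum_eq_zero fun n _ => by rw [if_neg (by omega), smul_zero], G, coeff_mk]
    split_ifs with h3
    · rw [Q_eq_zero_of_add_lt_two (by omega), Nat.cast_zero]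
    · rfl
  · obtain ⟨m, rfl⟩ : ∃ m, k = m + 5 := ⟨k - 5, by omega⟩
    rw [sum_eq_single m (fun n _ hn => by rw [if_neg (by omega), smul_zero])
      (fun hm => absurd (mem_range.2 (by omega)) hm), if_pos rfl, G, coeff_mk, if_pos (by omega),
      show m + 5 - 3 = m + 2 by omega, nsmul_one]

theorem G_add_subst_of_kernel {ξ : ℚ⟦X⟧} (h0 : constantCoeff ξ = 0)
    (hroot : X * ξ - X ^ 3 - ξ ^ 3 = 0) : G + G.subst ξ = (X * ξ) ^ 2 := by
  have ha := HasSubst.of_constantCoeff_zero' h0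
  refine (sub_eq_zero.1 (eq_zero_of_forall_X_pow_dvd fun M =>
    (pow_dvd_pow X (Nat.le_add_right M 2)).trans ?_)).symm
  set T := ∑ n ∈ range M, Q (n + 2) 0 • (X : ℚ⟦X⟧) ^ (n + 5)
  have hT : T.subst ξ = ∑ n ∈ range M, Q (n + 2) 0 • ξ ^ (n + 5) := by
    simp only [T, ← coe_substAlgHom ha, map_sum, map_nsmul, map_pow]
    rw [coe_substAlgHom, subst_X ha]
  have hkernel : X * ξ * (X * ξ - walkPoly M X ξ) = T + T.subst ξ := by
    rw [mul_sub_walkPoly_of_kernel (by linear_combination hroot), hT, ← sum_add_distrib]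
    simp_rw [smul_add]
  have hsplit : (X * ξ) ^ 2 - (G + G.subst ξ) =
      X * ξ * walkPoly M X ξ - (G - T) - (G.subst ξ - T.subst ξ) := by
    linear_combination hkernel
  rw [hsplit]
  refine dvd_sub (dvd_sub ?_ ?_) ?_
  · exact dvd_mul_of_dvd_right (pow_dvd_walkPoly dvd_rfl (X_dvd_iff.2 h0) M) _
  · exact (pow_dvd_pow X (by omega)).trans (X_pow_dvd_G_sub_sum M)
  · exact (pow_dvd_pow X (by omega)).trans (X_pow_dvd_subst_sub_subst h0 (X_pow_dvd_G_sub_sum M))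

theorem G_eq_sum_range_add {ξ : ℚ⟦X⟧} (h0 : constantCoeff ξ = 0)
    (hroot : X * ξ - X ^ 3 - ξ ^ 3 = 0) (n : ℕ) :
    G = ∑ i ∈ range n, (-1 : ℚ) ^ i • (iterXi ξ i * iterXi ξ (i + 1)) ^ 2 +
      (-1 : ℚ) ^ n • G.subst (iterXi ξ n) := by
  have hstep (i : ℕ) :
      G.subst (iterXi ξ i) + G.subst (iterXi ξ (i + 1)) = (iterXi ξ i * iterXi ξ (i + 1)) ^ 2 := by
    have ha := HasSubst.of_constantCoeff_zero' (constantCoeff_iterXi h0 hroot i)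
    rw [iterXi_succ_eq_subst (constantCoeff_iterXi h0 hroot i),
      ← subst_comp_subst_apply (HasSubst.of_constantCoeff_zero' h0) ha, ← subst_add ha,
      G_add_subst_of_kernel h0 hroot, subst_pow ha, subst_mul ha, subst_X ha]
  have h := eq_sum_range_neg_one_pow_smul_add (R := ℚ) (fun i => G.subst (iterXi ξ i)) n
  simp only [hstep] at h
  rwa [show iterXi ξ 0 = X from rfl, X_subst] at h

/-- If `ξ` is the formal power series with zero constant term satisfying
`xξ − x³ − ξ³ = 0`, then its `i`-th compositional iterate has valuation `2ⁱ`, the sum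
`∑_i (−1)ⁱ (ξ⁽ⁱ⁾ ξ⁽ⁱ⁺¹⁾)²` converges coefficientwise in `ℚ[[x]]`, and equals `G`. -/
theorem knight_G_iterated_sum (ξ : PowerSeries ℚ)
    (h0 : PowerSeries.constantCoeff ξ = 0)
    (hroot : PowerSeries.X * ξ - PowerSeries.X ^ 3 - ξ ^ 3 = 0) :
    (∀ i : ℕ, (iterXi ξ i).order = (2 ^ i : ℕ)) ∧
    (∀ N : ℕ, {i : ℕ |
      PowerSeries.coeff N ((iterXi ξ i * iterXi ξ (i + 1)) ^ 2) ≠ 0}.Finite) ∧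
    G = PowerSeries.mk fun N =>
      ∑ᶠ i : ℕ, (-1 : ℚ) ^ i *
        PowerSeries.coeff N ((iterXi ξ i * iterXi ξ (i + 1)) ^ 2) := by
  have hlt {N i : ℕ} (hi : N < i) : N < 2 ^ i :=
    Nat.lt_two_pow_self.trans_le (Nat.pow_le_pow_right two_pos hi.le)
  have hsupp (N : ℕ) :
      {i | coeff N ((iterXi ξ i * iterXi ξ (i + 1)) ^ 2) ≠ 0} ⊆ ↑(range (N + 1)) := by
    intro i hi
    by_contra h
    exact hi (coeff_iterXi_mul_iterXi_succ_sq_eq_zero h0 hroot (hlt (by simpa using h)))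
  refine ⟨order_iterXi h0 hroot, fun N => (finite_toSet _).subset (hsupp N), ?_⟩
  ext N
  have htail : coeff N (G.subst (iterXi ξ (N + 1))) = 0 :=
    X_pow_dvd_iff.1 ((X_pow_dvd_iterXi h0 hroot _).trans (dvd_subst_of_constantCoeff_eq_zero
      constantCoeff_G (constantCoeff_iterXi h0 hroot _))) N (hlt N.lt_succ_self)
  rw [coeff_mk, finsum_eq_sum_of_support_subset _ fun i hi => hsupp N (right_ne_zero_of_mul hi),
    G_eq_sum_range_add h0 hroot (N + 1), map_add, map_sum, coeff_smul, htail, smul_zero, add_zero]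
  simp only [coeff_smul, smul_eq_mul]
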